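/- arXiv:hep-th/9502041 — 2 statements merged into one kernel-verified Lean document; each statement's English description precedes it below -/
import Mathlib

section
/- With notation as in the context, the identity a_{p+1}(u) f^{(p)}(σ;u) + e^{2λσ} b_p(λ)^2 f^{(p-1)}(σ;u) = f^{(p)}(σ;u-λ) a_1(u) holds for all σ, u ∈ ℂ and integers 1 ≤ p ≤ 2s, where b_p(λ)^2 = sinh(pλ) sinh((2s+1-p)λ). -/
/-!
Write `f^{(p)}(σ;u) = ∑_{k=0}^{p} (-e^{2λσ})^k T_{p,k}(u)`. Since
`e^{2λσ} (-e^{2λσ})^k = -(-e^{2λσ})^{k+1}`, the identity can be checked coefficient by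
coefficient. The constant coefficient is a telescoping of `∏_j sinh(u+(2s+j-p)λ)` between
`a_{p+1}(u)` and `a_1(u)`. In the coefficient of `(-e^{2λσ})^{k+1}` the products common to all
terms factor out, and what remains is the relation `[p choose k+1] [k+1] = [p] [p-1 choose k]`
together with `sinh a sinh b - sinh c sinh d = sinh (a - c) sinh (b - c)` for `a + b = c + d`.
-/

open Finset Complex

/-- q-integer `[n] = sinh(nλ)/sinh(λ)` with `q = e^λ`. -/
noncomputable def sqint (lam : ℂ) (n : ℕ) : ℂ := Complex.sinh (n * lam) / Complex.sinh lam

/-- q-factorial. -/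
noncomputable def sqfact (lam : ℂ) : ℕ → ℂ
  | 0 => 1
  | n + 1 => sqint lam (n + 1) * sqfact lam n

/-- q-binomial coefficient `[m choose n]`, zero when `n > m`. -/
noncomputable def sqbinom (lam : ℂ) (m n : ℕ) : ℂ :=
  if n ≤ m then sqfact lam m / (sqfact lam (m - n) * sqfact lam n) else 0

/-- The function
`f^{(p)}(σ;u) = ∑_{k=0}^{p} (-e^{2λσ})^k [p choose k]_q
  ∏_{j=1}^{k} sinh(u+(j-1)λ) ∏_{j=k+1}^{p} sinh(u+(2s+j-p)λ)`,
where `s2 = 2s`. -/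
noncomputable def ff (s2 : ℕ) (lam σ u : ℂ) (p : ℕ) : ℂ :=
  ∑ k ∈ range (p + 1),
    (-Complex.exp (2 * lam * σ)) ^ k * sqbinom lam p k
      * (∏ j ∈ range k, Complex.sinh (u + (j : ℂ) * lam))
      * (∏ j ∈ Finset.Ico k p, Complex.sinh (u + ((s2 : ℂ) + (j : ℂ) + 1 - (p : ℂ)) * lam))

theorem sqfact_eq_prod (lam : ℂ) (n : ℕ) :
    sqfact lam n = ∏ i ∈ range n, sqint lam (i + 1) := by
  induction n with
  | zero => rfl
  | succ n ih => rw [prod_range_succ, ← ih, mul_comm]; rfl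

theorem sqfact_eq_zero_of_lt {lam : ℂ} {k n : ℕ} (h : sqint lam (k + 1) = 0) (hk : k < n) :
    sqfact lam n = 0 := by
  rw [sqfact_eq_prod]
  exact prod_eq_zero (mem_range.2 hk) h

theorem sqbinom_succ_succ_mul_sqint (lam : ℂ) (n k : ℕ) :
    sqbinom lam (n + 1) (k + 1) * sqint lam (k + 1) = sqint lam (n + 1) * sqbinom lam n k := by
  by_cases hk : k ≤ n
  swap
  · simp [sqbinom, hk]
  simp only [sqbinom, Nat.add_le_add_iff_right, if_pos hk, Nat.add_sub_add_right, sqfact]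
  by_cases hx : sqint lam (k + 1) = 0
  -- the right side vanishes too: `[k+1]` divides `[n]!` if `k < n`, and is `[n+1]` if `k = n`
  · rcases hk.lt_or_eq with hlt | rfl
    · simp [hx, sqfact_eq_zero_of_lt hx hlt]
    · simp [hx]
  · field_simp

theorem sqint_mul_sinh {lam : ℂ} (hlam : sinh lam ≠ 0) (n : ℕ) :
    sqint lam n * sinh lam = sinh (n * lam) :=
  div_mul_cancel₀ _ hlam

theorem sinh_mul_sinh_sub_sinh_mul_sinh {a b c d : ℂ} (h : a + b = c + d) :
    sinh a * sinh b - sinh c * sinh d = sinh (a - c) * sinh (b - c) := by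
  obtain rfl : d = c + (a - c) + (b - c) := by linear_combination -h
  set x := a - c
  set y := b - c
  rw [show a = c + x by ring, show b = c + y by ring]
  simp only [sinh_add, cosh_add]
  linear_combination (sinh x * sinh y) * cosh_sq_sub_sinh_sq c

theorem sqbinom_succ_succ_mul_sinh {lam : ℂ} (hlam : sinh lam ≠ 0) (n k : ℕ) :
    sqbinom lam (n + 1) (k + 1) * sinh ((k + 1 : ℕ) * lam)
      = sinh ((n + 1 : ℕ) * lam) * sqbinom lam n k := by
  rw [← sqint_mul_sinh hlam, ← sqint_mul_sinh hlam]
  linear_combination sinh lam * sqbinom_succ_succ_mul_sqint lam n k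

noncomputable def sinhProd (lam x : ℂ) (n : ℕ) : ℂ := ∏ j ∈ range n, sinh (x + j * lam)

theorem sinhProd_zero (lam x : ℂ) : sinhProd lam x 0 = 1 := prod_range_zero _

theorem sinhProd_succ (lam x : ℂ) (n : ℕ) :
    sinhProd lam x (n + 1) = sinhProd lam x n * sinh (x + n * lam) :=
  prod_range_succ _ _

theorem sinhProd_succ' (lam x : ℂ) (n : ℕ) :
    sinhProd lam x (n + 1) = sinhProd lam (x + lam) n * sinh x := by
  simp only [sinhProd, prod_range_succ', Nat.cast_zero, zero_mul, add_zero]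
  congr 1
  exact prod_congr rfl fun j _ => by push_cast; ring_nf

theorem sinh_mul_sinhProd_add (lam x : ℂ) (n : ℕ) :
    sinh x * sinhProd lam (x + lam) n = sinhProd lam x n * sinh (x + n * lam) := by
  rw [mul_comm, ← sinhProd_succ', sinhProd_succ]

noncomputable def ffTerm (s2 : ℕ) (lam u : ℂ) (p k : ℕ) : ℂ :=
  sqbinom lam p k * sinhProd lam u k * sinhProd lam (u + ((s2 : ℂ) + k + 1 - p) * lam) (p - k)

theorem ff_eq_sum_ffTerm (s2 : ℕ) (lam σ u : ℂ) (p : ℕ) :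
    ff s2 lam σ u p
      = ∑ k ∈ range (p + 1), (-exp (2 * lam * σ)) ^ k * ffTerm s2 lam u p k := by
  refine sum_congr rfl fun k _ => ?_
  rw [ffTerm, sinhProd, sinhProd, prod_Ico_eq_prod_range]
  simp only [mul_assoc]
  congr 3
  exact prod_congr rfl fun j _ => by push_cast; ring_nf

theorem ffTerm_zero (s2 : ℕ) (lam u : ℂ) (p : ℕ) :
    sinh (u + ((s2 : ℂ) - p) * lam) * ffTerm s2 lam u p 0
      = ffTerm s2 lam (u - lam) p 0 * sinh (u + s2 * lam) := by
  have h := sinh_mul_sinhProd_add lam (u + ((s2 : ℂ) - p) * lam) p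
  rw [show u + ((s2 : ℂ) - p) * lam + lam = u + ((s2 : ℂ) + 1 - p) * lam by ring,
    show u + ((s2 : ℂ) - p) * lam + p * lam = u + s2 * lam by ring] at h
  simp only [ffTerm, sinhProd_zero, Nat.sub_zero, Nat.cast_zero, add_zero, mul_one]
  rw [show u - lam + ((s2 : ℂ) + 1 - p) * lam = u + ((s2 : ℂ) - p) * lam by ring]
  linear_combination sqbinom lam p 0 * h

theorem ffTerm_succ_succ {lam : ℂ} (hlam : sinh lam ≠ 0) (s2 : ℕ) (u : ℂ) {p k : ℕ}
    (hk : k ≤ p) :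
    sinh (u + ((s2 : ℂ) - (p + 1 : ℕ)) * lam) * ffTerm s2 lam u (p + 1) (k + 1)
      - sinh ((p + 1 : ℕ) * lam) * sinh (((s2 : ℂ) + 1 - (p + 1 : ℕ)) * lam)
        * ffTerm s2 lam u p k
      = ffTerm s2 lam (u - lam) (p + 1) (k + 1) * sinh (u + s2 * lam) := by
  set y := u + ((s2 : ℂ) + k + 1 - p) * lam
  have hy : u + ((s2 : ℂ) + (k + 1 : ℕ) + 1 - (p + 1 : ℕ)) * lam = y := by
    simp only [y]; push_cast; ring
  have hB := sqbinom_succ_succ_mul_sinh hlam p k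
  have hS := sinh_mul_sinh_sub_sinh_mul_sinh (a := u + ((s2 : ℂ) - (p + 1 : ℕ)) * lam)
    (b := u + k * lam) (c := u - lam) (d := y - lam) (by simp only [y]; push_cast; ring)
  have hT := sinh_mul_sinhProd_add lam (y - lam) (p - k)
  rw [sub_add_cancel, show y - lam + (p - k : ℕ) * lam = u + s2 * lam by
    simp only [y]; push_cast [hk]; ring] at hT
  have hy' : u - lam + ((s2 : ℂ) + (k + 1 : ℕ) + 1 - (p + 1 : ℕ)) * lam = y - lam := by
    rw [sub_add_eq_add_sub, hy]
  rw [ffTerm, ffTerm, ffTerm, Nat.add_sub_add_right, hy, hy', sinhProd_succ lam u k,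
    sinhProd_succ' lam (u - lam) k, sub_add_cancel]
  rw [show u + ((s2 : ℂ) - (p + 1 : ℕ)) * lam - (u - lam)
      = ((s2 : ℂ) + 1 - (p + 1 : ℕ)) * lam by ring,
    show u + k * lam - (u - lam) = (k + 1 : ℕ) * lam by push_cast; ring] at hS
  linear_combination
    sqbinom lam (p + 1) (k + 1) * sinhProd lam u k * sinhProd lam y (p - k) * hS
    + sinh (((s2 : ℂ) + 1 - (p + 1 : ℕ)) * lam) * sinhProd lam u k * sinhProd lam y (p - k) * hB
    + sqbinom lam (p + 1) (k + 1) * sinhProd lam u k * sinh (u - lam) * hT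

theorem f_identity_two_general (s2 : ℕ) (lam : ℂ) (hlam : Complex.sinh lam ≠ 0)
    (σ u : ℂ) (p : ℕ) (hp : 1 ≤ p) :
    Complex.sinh (u + ((s2 : ℂ) - (p : ℂ)) * lam) * ff s2 lam σ u p
      + Complex.exp (2 * lam * σ)
          * (Complex.sinh ((p : ℂ) * lam) * Complex.sinh (((s2 : ℂ) + 1 - (p : ℂ)) * lam))
          * ff s2 lam σ u (p - 1)
      = ff s2 lam σ (u - lam) p * Complex.sinh (u + (s2 : ℂ) * lam) := by
  obtain ⟨p, rfl⟩ : ∃ p', p = p' + 1 := ⟨p - 1, by omega⟩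
  rw [Nat.add_sub_cancel, ff_eq_sum_ffTerm, ff_eq_sum_ffTerm, ff_eq_sum_ffTerm, sum_range_succ',
    sum_range_succ' _ (p + 1), mul_add, add_mul, mul_sum, mul_sum, sum_mul]
  set c := -exp (2 * lam * σ)
  set a := sinh (u + ((s2 : ℂ) - (p + 1 : ℕ)) * lam)
  set b2 := sinh ((p + 1 : ℕ) * lam) * sinh (((s2 : ℂ) + 1 - (p + 1 : ℕ)) * lam)
  have h_terms : ∑ k ∈ range (p + 1),
      (a * (c ^ (k + 1) * ffTerm s2 lam u (p + 1) (k + 1)) + exp (2 * lam * σ) * b2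
          * (c ^ k * ffTerm s2 lam u p k))
      = ∑ k ∈ range (p + 1),
          c ^ (k + 1) * ffTerm s2 lam (u - lam) (p + 1) (k + 1) * sinh (u + s2 * lam) :=
    sum_congr rfl fun k hk => by
      have hkp : k ≤ p := Nat.lt_succ_iff.1 (mem_range.1 hk)
      linear_combination c ^ (k + 1) * ffTerm_succ_succ hlam s2 u hkp
  rw [sum_add_distrib] at h_terms
  linear_combination h_terms + ffTerm_zero s2 lam u (p + 1)

/-- Lemma 1, Eq. (f2): `a_{p+1}(u) f^{(p)}(σ;u) + e^{2λσ} b_p(λ)² f^{(p-1)}(σ;u)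
  = f^{(p)}(σ;u-λ) a_1(u)`, where `a_{p+1}(u) = sinh(u+(2s-p)λ)`,
  `b_p(λ)² = sinh(pλ) sinh((2s+1-p)λ)` and `a_1(u) = sinh(u+2sλ)`. -/
theorem f_identity_two (s2 : ℕ) (hs2 : 1 ≤ s2) (lam : ℂ) (hlam : Complex.sinh lam ≠ 0)
    (σ u : ℂ) (p : ℕ) (hp : 1 ≤ p) (hp2 : p ≤ s2) :
    Complex.sinh (u + ((s2 : ℂ) - (p : ℂ)) * lam) * ff s2 lam σ u p
      + Complex.exp (2 * lam * σ)
          * (Complex.sinh ((p : ℂ) * lam) * Complex.sinh (((s2 : ℂ) + 1 - (p : ℂ)) * lam))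
          * ff s2 lam σ u (p - 1)
      = ff s2 lam σ (u - lam) p * Complex.sinh (u + (s2 : ℂ) * lam) :=
  f_identity_two_general s2 lam hlam σ u p hp
end

section
/- With notation as in the context, if σ ∈ {-s, -s+1, ..., s} (i.e. σ = -s + m for some integer 0 ≤ m ≤ 2s), then the quasi-periodicity f^{(2s)}(σ; u−λ) = e^{2λσ} f^{(2s)}(σ; u) holds for all u ∈ ℂ. -/
open Finset Complex

/-!
For `p = 2s`, `f = ∑ₖ (-E)^k [p choose k] ∏_{j ≠ k} sinh(u + jλ)` with
`E = e^{2λσ} = e^{-(p-2m)λ}`. For such `E` it equals `e^{(p-2m)u} ∏_{j=1}^{p} sinh(jλ)`,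
from which the quasi-periodicity is immediate. The closed form is proved by induction on `p`:
the two q-Pascal rules (with `q = e^λ` and `q = e^{-λ}`) express the sum for `p + 1` through
the sums for `p` at `u` and at `u + λ`, with `E` multiplied by `q`, so the exponent `p - 2m`
moves by `±1`. If some `[j]`, `j ≤ p`, vanishes, every coefficient `[p choose k]` is zero and
so is `f`.
-/

lemma sinh_add_eq_exp_mul_sinh_add (ε A B : ℂ) (hε : ε = 1 ∨ ε = -1) :
    sinh (A + B) = exp (ε * A) * sinh B + exp (-(ε * B)) * sinh A := by
  rcases hε with rfl | rfl
  · rw [one_mul, one_mul, sinh_add, ← cosh_add_sinh A, ← cosh_sub_sinh B]; ring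
  · rw [neg_one_mul, neg_one_mul, neg_neg, sinh_add, ← cosh_sub_sinh A, ← cosh_add_sinh B]
    ring

lemma sqfact_succ (lam : ℂ) (n : ℕ) : sqfact lam (n + 1) = sqint lam (n + 1) * sqfact lam n :=
  rfl

lemma sqfact_ne_zero_of_le {lam : ℂ} {m n : ℕ} (h : sqfact lam n ≠ 0) (hmn : m ≤ n) :
    sqfact lam m ≠ 0 := by
  induction n, hmn using Nat.le_induction with
  | base => exact h
  | succ n _ ih => exact ih (right_ne_zero_of_mul h)

lemma sqint_ne_zero {lam : ℂ} {m n : ℕ} (h : sqfact lam n ≠ 0) (hmn : m + 1 ≤ n) :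
    sqint lam (m + 1) ≠ 0 :=
  left_ne_zero_of_mul (sqfact_ne_zero_of_le h hmn)

lemma sqbinom_of_add_eq {lam : ℂ} {k n p : ℕ} (h : k + n = p) :
    sqbinom lam p k = sqfact lam p / (sqfact lam n * sqfact lam k) := by
  subst h; simp [sqbinom]

lemma sqbinom_of_lt {lam : ℂ} {p k : ℕ} (h : p < k) : sqbinom lam p k = 0 :=
  if_neg (by omega)

lemma sqbinom_eq_zero_of_sqfact_eq_zero {lam : ℂ} {p : ℕ} (h : sqfact lam p = 0) (k : ℕ) :
    sqbinom lam p k = 0 := by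
  unfold sqbinom; split_ifs <;> simp [h]

lemma sqbinom_zero_right {lam : ℂ} {p : ℕ} (h : sqfact lam p ≠ 0) : sqbinom lam p 0 = 1 := by
  simp [sqbinom, sqfact, h]

lemma sqbinom_self {lam : ℂ} {p : ℕ} (h : sqfact lam p ≠ 0) : sqbinom lam p p = 1 := by
  simp [sqbinom, sqfact, h]

lemma sqint_add_add_one {ε : ℂ} (hε : ε = 1 ∨ ε = -1) (lam : ℂ) (k n : ℕ) :
    sqint lam (k + n + 1) = exp (ε * lam) ^ (k + 1) * sqint lam n
      + (exp (ε * lam))⁻¹ ^ n * sqint lam (k + 1) := by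
  simp only [sqint, ← exp_nat_mul, ← exp_neg]
  push_cast
  rw [show ((k : ℂ) + n + 1) * lam = (k + 1) * lam + n * lam by ring,
    sinh_add_eq_exp_mul_sinh_add ε _ _ hε]
  ring_nf

lemma sqbinom_succ_succ {ε : ℂ} (hε : ε = 1 ∨ ε = -1) {lam : ℂ} {p k : ℕ}
    (hF : sqfact lam (p + 1) ≠ 0) (hk : k ≤ p) :
    sqbinom lam (p + 1) (k + 1) = exp (ε * lam) ^ (k + 1) * sqbinom lam p (k + 1)
      + exp (ε * lam) ^ k * (exp (ε * lam))⁻¹ ^ p * sqbinom lam p k := by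
  obtain ⟨n, rfl⟩ := Nat.exists_eq_add_of_le hk
  have hinv : exp (ε * lam) ^ k * (exp (ε * lam))⁻¹ ^ (k + n) = (exp (ε * lam))⁻¹ ^ n := by
    rw [pow_add, ← mul_assoc, ← mul_pow, mul_inv_cancel₀ (exp_ne_zero _), one_pow, one_mul]
  rw [hinv]
  cases n with
  | zero =>
    rw [add_zero, sqbinom_self hF, sqbinom_self (sqfact_ne_zero_of_le hF k.le_succ),
      sqbinom_of_lt k.lt_succ_self]
    simp
  | succ n =>
    have hqk := sqint_ne_zero hF (m := k) (by omega)
    have hqn := sqint_ne_zero hF (m := n) (by omega)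
    have hk := sqfact_ne_zero_of_le hF (m := k) (by omega)
    have hn := sqfact_ne_zero_of_le hF (m := n) (by omega)
    rw [sqbinom_of_add_eq (show (k + 1) + (n + 1) = k + (n + 1) + 1 by ring),
      sqbinom_of_add_eq (show (k + 1) + n = k + (n + 1) by ring), sqbinom_of_add_eq rfl,
      sqfact_succ lam (k + (n + 1)), sqint_add_add_one hε, sqfact_succ lam n, sqfact_succ lam k]
    field_simp

lemma sum_range_sqbinom_succ_mul {ε : ℂ} (hε : ε = 1 ∨ ε = -1) {lam : ℂ} {p : ℕ}
    (hF : sqfact lam (p + 1) ≠ 0) (a : ℕ → ℂ) :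
    ∑ k ∈ range (p + 2), sqbinom lam (p + 1) k * a k
      = ∑ k ∈ range (p + 1), sqbinom lam p k * (exp (ε * lam) ^ k * a k
          + exp (ε * lam) ^ k * (exp (ε * lam))⁻¹ ^ p * a (k + 1)) := by
  set t := exp (ε * lam)
  have hshift : ∑ k ∈ range (p + 1), sqbinom lam p k * (t ^ k * a k)
      = ∑ k ∈ range (p + 1), sqbinom lam p (k + 1) * (t ^ (k + 1) * a (k + 1)) + a 0 := by
    calc _ = ∑ k ∈ range (p + 2), sqbinom lam p k * (t ^ k * a k) := by
          rw [sum_range_succ _ (p + 1), sqbinom_of_lt p.lt_succ_self, zero_mul, add_zero]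
      _ = _ := by
          rw [sum_range_succ', sqbinom_zero_right (sqfact_ne_zero_of_le hF p.le_succ), pow_zero,
            one_mul, one_mul]
  have hpascal : ∀ k ∈ range (p + 1), sqbinom lam (p + 1) (k + 1) * a (k + 1)
      = sqbinom lam p (k + 1) * (t ^ (k + 1) * a (k + 1))
        + sqbinom lam p k * (t ^ k * t⁻¹ ^ p * a (k + 1)) := fun k hk => by
    rw [sqbinom_succ_succ hε hF (Nat.lt_succ_iff.mp (mem_range.mp hk))]; ring
  rw [sum_range_succ', sum_congr rfl hpascal, sqbinom_zero_right hF]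
  simp only [mul_add, sum_add_distrib, hshift]
  ring

/-- `∏_{0 ≤ j ≤ p, j ≠ k} sinh (u + j λ)`. -/
noncomputable def sinhProdErase (lam u : ℂ) (p k : ℕ) : ℂ :=
  (∏ j ∈ range k, sinh (u + j * lam)) * ∏ j ∈ Ico k p, sinh (u + (j + 1) * lam)

lemma sinhProdErase_succ_of_le (lam u : ℂ) {p k : ℕ} (hk : k ≤ p) :
    sinhProdErase lam u (p + 1) k = sinh (u + (p + 1) * lam) * sinhProdErase lam u p k := by
  rw [sinhProdErase, sinhProdErase, prod_Ico_succ_top hk]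
  ring

lemma sinhProdErase_succ_succ (lam u : ℂ) (p k : ℕ) :
    sinhProdErase lam u (p + 1) (k + 1) = sinh u * sinhProdErase lam (u + lam) p k := by
  have hshift (x : ℂ) : u + (x + 1) * lam = u + lam + x * lam := by ring
  rw [sinhProdErase, sinhProdErase, prod_range_succ', ← prod_Ico_add' _ k p 1]
  push_cast
  simp only [hshift, zero_mul, add_zero]
  ring

noncomputable def fGen (lam E u : ℂ) (p : ℕ) : ℂ :=
  ∑ k ∈ range (p + 1), (-E) ^ k * sqbinom lam p k * sinhProdErase lam u p k

lemma ff_self_eq_fGen (s2 : ℕ) (lam σ u : ℂ) :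
    ff s2 lam σ u s2 = fGen lam (exp (2 * lam * σ)) u s2 := by
  refine sum_congr rfl fun k _ => ?_
  rw [sinhProdErase, ← mul_assoc]
  ring_nf

lemma fGen_eq_zero_of_sqfact_eq_zero {lam : ℂ} {p : ℕ} (hF : sqfact lam p = 0) (E u : ℂ) :
    fGen lam E u p = 0 :=
  sum_eq_zero fun k _ => by rw [sqbinom_eq_zero_of_sqfact_eq_zero hF, mul_zero, zero_mul]

lemma fGen_succ {ε : ℂ} (hε : ε = 1 ∨ ε = -1) {lam : ℂ} {p : ℕ}
    (hF : sqfact lam (p + 1) ≠ 0) (E u : ℂ) :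
    fGen lam E u (p + 1)
      = sinh (u + (p + 1) * lam) * fGen lam (exp (ε * lam) * E) u p
        - E * (exp (ε * lam))⁻¹ ^ p * sinh u * fGen lam (exp (ε * lam) * E) (u + lam) p := by
  calc fGen lam E u (p + 1)
      = ∑ k ∈ range (p + 2),
          sqbinom lam (p + 1) k * ((-E) ^ k * sinhProdErase lam u (p + 1) k) :=
        sum_congr rfl fun k _ => by ring
    _ = _ := by
      rw [sum_range_sqbinom_succ_mul hε hF, fGen, fGen, mul_sum, mul_sum, ← sum_sub_distrib]
      refine sum_congr rfl fun k hk => ?_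
      rw [sinhProdErase_succ_of_le lam u (Nat.lt_succ_iff.mp (mem_range.mp hk)),
        sinhProdErase_succ_succ]
      ring

lemma fGen_exp_succ {ε : ℂ} (hε : ε = 1 ∨ ε = -1) {lam : ℂ} {p : ℕ}
    (hF : sqfact lam (p + 1) ≠ 0) {a C : ℂ}
    (ih : ∀ u, fGen lam (exp (-(a * lam))) u p = exp (a * u) * C) (u : ℂ) :
    fGen lam (exp (-((a + ε) * lam))) u (p + 1)
      = exp ((a + ε) * u) * (C * sinh ((p + 1) * lam)) := by
  have hE : exp (ε * lam) * exp (-((a + ε) * lam)) = exp (-(a * lam)) := by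
    rw [← exp_add]; ring_nf
  have hu : exp (ε * u) * exp (a * u) = exp ((a + ε) * u) := by
    rw [← exp_add]; ring_nf
  have hlam : exp (-(ε * ((p + 1) * lam))) * exp (a * u)
      = exp (-((a + ε) * lam)) * (exp (ε * lam))⁻¹ ^ p * exp (a * (u + lam)) := by
    rw [← exp_neg, ← exp_nat_mul, ← exp_add, ← exp_add, ← exp_add]; ring_nf
  rw [fGen_succ hε hF, hE, ih, ih, sinh_add_eq_exp_mul_sinh_add ε u _ hε]
  linear_combination (C * sinh ((p + 1) * lam)) * hu + (C * sinh u) * hlam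

lemma fGen_exp_eq {lam : ℂ} {p m : ℕ} (hF : sqfact lam p ≠ 0) (hm : m ≤ p) (u : ℂ) :
    fGen lam (exp (-((p - 2 * m : ℂ) * lam))) u p
      = exp ((p - 2 * m : ℂ) * u) * ∏ j ∈ range p, sinh ((j + 1) * lam) := by
  induction p generalizing m u with
  | zero =>
    obtain rfl : m = 0 := by omega
    simp [fGen, sqbinom, sqfact, sinhProdErase]
  | succ p ih =>
    have hF' := sqfact_ne_zero_of_le hF p.le_succ
    rw [prod_range_succ]
    rcases hm.lt_or_eq with hm | rfl
    · convert fGen_exp_succ (Or.inl rfl) hF (ih hF' (m := m) (by omega)) u using 3 <;>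
        push_cast <;> ring
    · convert fGen_exp_succ (Or.inr rfl) hF (ih hF' (m := p) le_rfl) u using 3 <;>
        push_cast <;> ring

lemma fGen_sub_lam {lam : ℂ} {p m : ℕ} (hm : m ≤ p) (u : ℂ) :
    fGen lam (exp (-((p - 2 * m : ℂ) * lam))) (u - lam) p
      = exp (-((p - 2 * m : ℂ) * lam)) * fGen lam (exp (-((p - 2 * m : ℂ) * lam))) u p := by
  by_cases hF : sqfact lam p = 0
  · simp only [fGen_eq_zero_of_sqfact_eq_zero hF, mul_zero]
  · rw [fGen_exp_eq hF hm, fGen_exp_eq hF hm, ← mul_assoc, ← exp_add]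
    ring_nf

theorem f_quasi_periodicity_general (s2 : ℕ) (lam : ℂ)
    (m : ℕ) (hm : m ≤ s2) (σ : ℂ) (hσ : σ = -(s2 : ℂ) / 2 + (m : ℂ)) (u : ℂ) :
    ff s2 lam σ (u - lam) s2 = Complex.exp (2 * lam * σ) * ff s2 lam σ u s2 := by
  have hE : 2 * lam * σ = -((s2 - 2 * m : ℂ) * lam) := by rw [hσ]; ring
  rw [ff_self_eq_fGen, ff_self_eq_fGen, hE]
  exact fGen_sub_lam hm u

/-- Lemma 1, Eq. (f3): if `σ ∈ {-s, -s+1, …, s}` (i.e. `σ = -s + m` for some `0 ≤ m ≤ 2s`),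
then `f^{(2s)}(σ;u-λ) = e^{2λσ} f^{(2s)}(σ;u)` for all `u`. -/
theorem f_quasi_periodicity (s2 : ℕ) (hs2 : 1 ≤ s2) (lam : ℂ) (hlam : Complex.sinh lam ≠ 0)
    (m : ℕ) (hm : m ≤ s2) (σ : ℂ) (hσ : σ = -(s2 : ℂ) / 2 + (m : ℂ)) (u : ℂ) :
    ff s2 lam σ (u - lam) s2 = Complex.exp (2 * lam * σ) * ff s2 lam σ u s2 :=
  f_quasi_periodicity_general s2 lam m hm σ hσ u
end
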